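/- Suppose in addition that K is compact with normalized Haar probability measure μ, and let T : K → L(E) be an almost σ-representation with finite σ-bound b(T) which is continuous for the operator norm on L(E). For g ∈ K define the averaged operator T̂(g) = ∫_K σ(g,h)·(T(gh)∘T(h)⁻¹) dμ(h), a Bochner integral in L(E) (the integrand is a continuous L(E)-valued function of h, each T(h) being invertible). Then: (a) T̂ : K → L(E) is again an operator-norm continuous A-semilinear pseudorepresentation with T̂(1) = id; (b) b(T̂) ≤ b(T)/(1 − r(T)); (c) r(T̂) ≤ 2·(b(T)/(1 − r(T)))²·r(T)²; (d) ‖T̂(g) − T(g)‖ ≤ b(T)·r(T)/(1 − r(T)) for every g ∈ K. (Group case of the paper's averaging estimates lemma.) -/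

import Mathlib

open MeasureTheory

/-- `ℓ(σ,g) = max {1, ‖σ(g,g⁻¹)⁻¹‖}`. -/
noncomputable def ell {K A : Type*} [Group K] [NormedRing A]
    (σ : K → K → A) (g : K) : ℝ :=
  max 1 ‖Ring.inverse (σ g g⁻¹)‖

/-- The σ-bound `b(T) = sup_{g ∈ K} ℓ(σ,g)·‖T(g)‖` of a pseudorepresentation. -/
noncomputable def sigmaBound {K A E : Type*} [Group K] [NormedRing A]
    [NormedAddCommGroup E] [NormedSpace ℝ E]
    (σ : K → K → A) (T : K → E →L[ℝ] E) : ℝ :=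
  ⨆ g : K, ell σ g * ‖T g‖

/-- The σ-defect
`r(T) = ‖id − T(1)‖ + sup_{g,h ∈ K} ℓ(σ,g)·‖σ(g,h)·T(gh) − T(g)∘T(h)‖`. -/
noncomputable def sigmaDefect {K A E : Type*} [Group K] [NormedRing A]
    [NormedAddCommGroup E] [NormedSpace ℝ E]
    [Module A E] [SMulCommClass ℝ A E] [ContinuousConstSMul A E]
    (σ : K → K → A) (T : K → E →L[ℝ] E) : ℝ :=
  ‖(1 : E →L[ℝ] E) - T 1‖ +
    ⨆ p : K × K, ell σ p.1 * ‖σ p.1 p.2 • T (p.1 * p.2) - (T p.1).comp (T p.2)‖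

/-- The averaged operator `T̂(g) = ∫_K σ(g,h)·(T(gh) ∘ T(h)⁻¹) dμ(h)`
(a Bochner integral in `L(E)`). -/
noncomputable def avgT {K A E : Type*} [Group K] [MeasurableSpace K] [NormedRing A]
    [NormedAddCommGroup E] [NormedSpace ℝ E]
    [Module A E] [SMulCommClass ℝ A E] [ContinuousConstSMul A E]
    (μ : Measure K) (σ : K → K → A) (T : K → E →L[ℝ] E) (g : K) : E →L[ℝ] E :=
  ∫ h, σ g h • ((T (g * h)).comp (Ring.inverse (T h))) ∂μ

/-!
Each `T x` is invertible with `‖T(x)⁻¹‖ ≤ b/(1 - r)`, because `σ(x⁻¹,x)⁻¹·T(x⁻¹)` and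
`T(x⁻¹)·σ(x,x⁻¹)⁻¹` are approximate left and right inverses of it. For the integrand
`F(g,h) = σ(g,h)·T(gh)·T(h)⁻¹` of `T̂`, the difference `F(g,h) - T(g)` equals
`(σ(g,h)·T(gh) - T(g)·T(h))·T(h)⁻¹`, of size at most `r·b/(1 - r)/ℓ(σ,g)`; averaging over `h`
gives (b) and (d). The cocycle identity makes `F` multiplicative up to `σ`,
`F(g,kh)·F(k,h) = σ(g,k)·F(gk,h)`, so integrating in `h` (with left invariance of `μ`) gives
`σ(g,k)·T̂(gk) - T̂(g)·T̂(k) = ∫ (F(g,kh) - T(g))·(F(k,h) - T(k)) dh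
  - (T̂(g) - T(g))·(T̂(k) - T(k))`,
which is quadratic in the defect: this is (c).
-/

section BanachAlgebra

variable {R : Type*} [NormedRing R]

theorem mul_norm_mul_le {R : Type*} [NormedRing R] {c C D : ℝ} {x y : R} (hc : 0 ≤ c)
    (hx : c * ‖x‖ ≤ C) (hy : ‖y‖ ≤ D) : c * ‖x * y‖ ≤ C * D :=
  calc c * ‖x * y‖ ≤ c * ‖x‖ * ‖y‖ := by rw [mul_assoc]; gcongr; exact norm_mul_le x y
    _ ≤ C * D := mul_le_mul hx hy (norm_nonneg y) ((mul_nonneg hc (norm_nonneg x)).trans hx)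

variable [CompleteSpace R]

theorem isUnit_of_norm_one_sub_mul_lt {x w v : R} (hw : ‖1 - w * x‖ < 1)
    (hv : ‖1 - x * v‖ < 1) : IsUnit x := by
  obtain ⟨u, hu⟩ : IsUnit (w * x) := by simpa using (Units.oneSub _ hw).isUnit
  obtain ⟨u', hu'⟩ : IsUnit (x * v) := by simpa using (Units.oneSub _ hv).isUnit
  refine isUnit_iff_exists_and_exists.2 ⟨⟨v * ↑u'⁻¹, ?_⟩, ⟨↑u⁻¹ * w, ?_⟩⟩
  · rw [← mul_assoc, ← hu', u'.mul_inv]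
  · rw [mul_assoc, ← hu, u.inv_mul]

theorem norm_inverse_one_sub_le (h1 : ‖(1 : R)‖ ≤ 1) {t : R} (ht : ‖t‖ < 1) :
    ‖Ring.inverse (1 - t)‖ ≤ (1 - ‖t‖)⁻¹ := by
  rw [NormedRing.inverse_one_sub t ht]
  change ‖∑' n, t ^ n‖ ≤ _
  linarith [tsum_geometric_le_of_norm_lt_one t ht]

theorem norm_inverse_le_of_norm_one_sub_mul_le (h1 : ‖(1 : R)‖ ≤ 1) {x w : R} {r : ℝ}
    (hx : IsUnit x) (hwx : ‖1 - w * x‖ ≤ r) (hr : r < 1) :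
    ‖Ring.inverse x‖ ≤ ‖w‖ / (1 - r) := by
  have hwx_lt : ‖1 - w * x‖ < 1 := hwx.trans_lt hr
  have hunit : IsUnit (w * x) := by simpa using (Units.oneSub _ hwx_lt).isUnit
  have hinv : Ring.inverse x = Ring.inverse (w * x) * w := by
    calc Ring.inverse x = Ring.inverse (w * x) * (w * x) * Ring.inverse x := by
          rw [Ring.inverse_mul_cancel _ hunit, one_mul]
      _ = Ring.inverse (w * x) * w := by
          simp only [mul_assoc, Ring.mul_inverse_cancel _ hx, mul_one]
  have hnorm : ‖Ring.inverse (w * x)‖ ≤ (1 - r)⁻¹ :=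
    calc ‖Ring.inverse (w * x)‖ = ‖Ring.inverse (1 - (1 - w * x))‖ := by rw [sub_sub_cancel]
      _ ≤ (1 - ‖1 - w * x‖)⁻¹ := norm_inverse_one_sub_le h1 hwx_lt
      _ ≤ (1 - r)⁻¹ := by gcongr
  calc ‖Ring.inverse x‖ ≤ ‖Ring.inverse (w * x)‖ * ‖w‖ := hinv ▸ norm_mul_le _ _
    _ ≤ (1 - r)⁻¹ * ‖w‖ := by gcongr
    _ = ‖w‖ / (1 - r) := inv_mul_eq_div _ _

theorem Continuous.ringInverse {X : Type*} [TopologicalSpace X] {f : X → R}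
    (hf : Continuous f) (hunit : ∀ x, IsUnit (f x)) : Continuous fun x => Ring.inverse (f x) :=
  continuous_iff_continuousAt.2 fun x => by
    obtain ⟨u, hu⟩ := hunit x
    exact (hu ▸ NormedRing.inverse_continuousAt u).comp hf.continuousAt

end BanachAlgebra

theorem Continuous.integrable_of_compactSpace {X F : Type*} [TopologicalSpace X] [CompactSpace X]
    [MeasurableSpace X] [OpensMeasurableSpace X] {μ : Measure X} [IsFiniteMeasure μ]
    [NormedAddCommGroup F] {f : X → F} (hf : Continuous f) : Integrable f μ :=
  hf.integrable_of_hasCompactSupport (HasCompactSupport.of_compactSpace f)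

theorem mul_norm_integral_le {X F : Type*} [MeasurableSpace X] {μ : Measure X}
    [IsProbabilityMeasure μ] [NormedAddCommGroup F] [NormedSpace ℝ F] {f : X → F} {c C : ℝ}
    (hc : 0 ≤ c) (hf : ∀ x, c * ‖f x‖ ≤ C) : c * ‖∫ x, f x ∂μ‖ ≤ C := by
  have hnorm : ∀ y : F, c * ‖y‖ = ‖c • y‖ := fun y => by rw [norm_smul, Real.norm_of_nonneg hc]
  calc c * ‖∫ x, f x ∂μ‖ = ‖∫ x, c • f x ∂μ‖ := by rw [hnorm, integral_smul]
    _ ≤ C * μ.real Set.univ :=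
        norm_integral_le_of_norm_le_const (ae_of_all _ fun x => (hnorm (f x)).symm.trans_le (hf x))
    _ = C := by simp

theorem continuous_integral_of_continuous_uncurry {X Y F : Type*} [TopologicalSpace X]
    [TopologicalSpace Y] [CompactSpace Y] [MeasurableSpace Y] [OpensMeasurableSpace Y]
    (μ : Measure Y) [IsFiniteMeasure μ] [NormedAddCommGroup F] [NormedSpace ℝ F]
    {f : X → Y → F} (hf : Continuous (Function.uncurry f)) :
    Continuous fun x => ∫ y, f x y ∂μ := by
  have hint : ∀ u : C(Y, F), Integrable u μ := fun u => u.continuous.integrable_of_compactSpace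
  let integral : C(Y, F) →+ F :=
    AddMonoidHom.mk' (fun u => ∫ y, u y ∂μ) fun u v => integral_add (hint u) (hint v)
  have hbound : ∀ u : C(Y, F), ‖integral u‖ ≤ μ.real Set.univ * ‖u‖ := fun u =>
    (norm_integral_le_of_norm_le_const (ae_of_all _ u.norm_coe_le_norm)).trans_eq (mul_comm _ _)
  exact (AddMonoidHomClass.continuous_of_bound integral _ hbound).comp
    (ContinuousMap.curry ⟨_, hf⟩).continuous

section ModuleOperators

variable {A E : Type*} [NormedRing A] [NormedAddCommGroup E] [NormedSpace ℝ E] [Module A E]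

def IsSemilinear (φ : A → A) (S : E →L[ℝ] E) : Prop :=
  ∀ (a : A) (e : E), S (a • e) = φ a • S e

theorem IsSemilinear.mul {φ ψ : A → A} {S U : E →L[ℝ] E} (hS : IsSemilinear φ S)
    (hU : IsSemilinear ψ U) : IsSemilinear (fun a => φ (ψ a)) (S * U) := fun a e => by
  change S (U (a • e)) = φ (ψ a) • S (U e)
  rw [hU, hS]

theorem IsSemilinear.ringInverse {φ ψ : A → A} {S : E →L[ℝ] E} (hS : IsSemilinear φ S)
    (hunit : IsUnit S) (hψ : Function.LeftInverse φ ψ) : IsSemilinear ψ (Ring.inverse S) :=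
  fun a e => by
  obtain ⟨u, rfl⟩ := hunit
  have hSinv : ∀ e, (u : E →L[ℝ] E) ((↑u⁻¹ : E →L[ℝ] E) e) = e := fun e =>
    congrArg (· e) u.mul_inv
  have hinvS : ∀ e, (↑u⁻¹ : E →L[ℝ] E) ((u : E →L[ℝ] E) e) = e := fun e =>
    congrArg (· e) u.inv_mul
  rw [Ring.inverse_unit]
  conv_lhs => rw [← hSinv e, ← hψ a, ← hS, hinvS]

variable [SMulCommClass ℝ A E] [ContinuousConstSMul A E]

theorem smul_mul_assoc_clm (a : A) (S U : E →L[ℝ] E) : (a • S) * U = a • (S * U) :=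
  rfl

theorem opNorm_smul_le_of_norm_smul_le (hAE : ∀ (a : A) (e : E), ‖a • e‖ ≤ ‖a‖ * ‖e‖)
    (a : A) (S : E →L[ℝ] E) : ‖a • S‖ ≤ ‖a‖ * ‖S‖ :=
  (a • S).opNorm_le_bound' (mul_nonneg (norm_nonneg _) (norm_nonneg _)) fun e _ =>
    calc ‖a • S e‖ ≤ ‖a‖ * ‖S e‖ := hAE a (S e)
      _ ≤ ‖a‖ * (‖S‖ * ‖e‖) := by gcongr; exact S.le_opNorm e
      _ = ‖a‖ * ‖S‖ * ‖e‖ := (mul_assoc _ _ _).symm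

theorem Continuous.smul_of_norm_smul_le (hAE : ∀ (a : A) (e : E), ‖a • e‖ ≤ ‖a‖ * ‖e‖)
    {X : Type*} [TopologicalSpace X] {f : X → A} {S : X → E →L[ℝ] E} (hf : Continuous f)
    (hS : Continuous S) : Continuous fun x => f x • S x := by
  let smulOne : A →+ (E →L[ℝ] E) := AddMonoidHom.mk' (· • 1) fun a c => add_smul a c 1
  have hsmulOne : Continuous smulOne :=
    AddMonoidHomClass.continuous_of_bound smulOne 1 fun a =>
      (opNorm_smul_le_of_norm_smul_le hAE a 1).trans <| by
        rw [one_mul]; exact mul_le_of_le_one_right (norm_nonneg a) ContinuousLinearMap.norm_id_le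
  exact (hsmulOne.comp hf).clm_comp hS

theorem integral_smul_clm {X : Type*} [MeasurableSpace X] {μ : Measure X} (a : A)
    {F : X → E →L[ℝ] E} (hF : Integrable F μ) : ∫ x, a • F x ∂μ = a • ∫ x, F x ∂μ :=
  integral_const_mul_of_integrable (c := a • (1 : E →L[ℝ] E)) hF

namespace IsSemilinear

variable {φ : A → A} {S : E →L[ℝ] E}

theorem mul_smul (hS : IsSemilinear φ S) (a : A) (U : E →L[ℝ] E) :
    S * (a • U) = φ a • (S * U) :=
  ContinuousLinearMap.ext fun e => hS a (U e)

theorem smul (hS : IsSemilinear φ S) {c : A} (hc : ∀ a, Commute c (φ a)) :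
    IsSemilinear φ (c • S) := fun a e => by
  change c • S (a • e) = φ a • c • S e
  rw [hS, smul_smul, (hc a).eq, ← smul_smul]

theorem integral [CompleteSpace E] {X : Type*} [MeasurableSpace X] {μ : Measure X}
    {F : X → E →L[ℝ] E} (hF : ∀ x, IsSemilinear φ (F x)) (hFint : Integrable F μ) :
    IsSemilinear φ (∫ x, F x ∂μ) := fun a e => by
  calc (∫ x, F x ∂μ) (a • e) = ∫ x, (φ a • (1 : E →L[ℝ] E)) (F x e) ∂μ := by
        rw [ContinuousLinearMap.integral_apply hFint]
        exact integral_congr_ae (ae_of_all _ fun x => hF x a e)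
    _ = φ a • (∫ x, F x ∂μ) e := by
        rw [ContinuousLinearMap.integral_comp_comm _ (hFint.apply_continuousLinearMap e),
          ContinuousLinearMap.integral_apply hFint]
        rfl

end IsSemilinear

end ModuleOperators

theorem act_mul_act_inv {K M : Type*} [Group K] {act : K → M → M} (hact_one : ∀ a, act 1 a = a)
    (hact_mul : ∀ g h a, act (g * h) a = act g (act h a)) (g h : K) (a : M) :
    act (g * h) (act h⁻¹ a) = act g a := by
  rw [hact_mul, ← hact_mul h, mul_inv_cancel, hact_one]

theorem act_act_inv {K M : Type*} [Group K] {act : K → M → M} (hact_one : ∀ a, act 1 a = a)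
    (hact_mul : ∀ g h a, act (g * h) a = act g (act h a)) (g : K) (a : M) :
    act g (act g⁻¹ a) = a := by
  rw [← hact_mul, mul_inv_cancel, hact_one]

section Pseudorepresentation

variable {K A E : Type*} [Group K] [NormedRing A] [NormedAddCommGroup E] [NormedSpace ℝ E]
  {σ : K → K → A} {T : K → E →L[ℝ] E}

theorem one_le_ell (σ : K → K → A) (g : K) : 1 ≤ ell σ g := le_max_left _ _

theorem ell_nonneg (σ : K → K → A) (g : K) : 0 ≤ ell σ g :=
  zero_le_one.trans (one_le_ell σ g)

theorem norm_le_ell_mul_norm {F : Type*} [NormedAddCommGroup F] (σ : K → K → A) (g : K) (x : F) :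
    ‖x‖ ≤ ell σ g * ‖x‖ :=
  le_mul_of_one_le_left (norm_nonneg x) (one_le_ell σ g)

theorem norm_inverse_le_ell (σ : K → K → A) (g : K) : ‖Ring.inverse (σ g g⁻¹)‖ ≤ ell σ g :=
  le_max_right _ _

theorem mul_norm_le_sigmaBound (hb : BddAbove (Set.range fun g : K => ell σ g * ‖T g‖)) (g : K) :
    ell σ g * ‖T g‖ ≤ sigmaBound σ T :=
  le_ciSup hb g

variable [Module A E] [SMulCommClass ℝ A E] [ContinuousConstSMul A E]

noncomputable def sigmaDefectAt (σ : K → K → A) (T : K → E →L[ℝ] E) (g h : K) : ℝ :=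
  ‖1 - T 1‖ + ell σ g * ‖σ g h • T (g * h) - T g * T h‖

theorem sigmaDefectAt_le_sigmaDefect (hr : BddAbove (Set.range fun p : K × K =>
      ell σ p.1 * ‖σ p.1 p.2 • T (p.1 * p.2) - (T p.1).comp (T p.2)‖)) (g h : K) :
    sigmaDefectAt σ T g h ≤ sigmaDefect σ T :=
  add_le_add_right (le_ciSup hr (g, h)) _

theorem ell_mul_norm_le_of_sigmaDefectAt_le {g h : K} {r : ℝ} (hr : sigmaDefectAt σ T g h ≤ r) :
    ell σ g * ‖σ g h • T (g * h) - T g * T h‖ ≤ r := by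
  unfold sigmaDefectAt at hr
  linarith [norm_nonneg (1 - T 1)]

theorem norm_one_sub_inverse_smul_mul_inv_le (hAE : ∀ (a : A) (e : E), ‖a • e‖ ≤ ‖a‖ * ‖e‖)
    {g : K} {r : ℝ} (hσ : IsUnit (σ g g⁻¹)) (hr : sigmaDefectAt σ T g g⁻¹ ≤ r) :
    ‖1 - Ring.inverse (σ g g⁻¹) • (T g * T g⁻¹)‖ ≤ r := by
  set c := Ring.inverse (σ g g⁻¹)
  have hsplit : 1 - c • (T g * T g⁻¹)
      = (1 - T 1) + c • (σ g g⁻¹ • T (g * g⁻¹) - T g * T g⁻¹) := by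
    rw [smul_sub, smul_smul, Ring.inverse_mul_cancel _ hσ, one_smul, mul_inv_cancel]
    abel
  calc ‖1 - c • (T g * T g⁻¹)‖
      ≤ ‖1 - T 1‖ + ‖c‖ * ‖σ g g⁻¹ • T (g * g⁻¹) - T g * T g⁻¹‖ := by
        rw [hsplit]
        exact (norm_add_le _ _).trans (add_le_add_right (opNorm_smul_le_of_norm_smul_le hAE _ _) _)
    _ ≤ sigmaDefectAt σ T g g⁻¹ := by
        unfold sigmaDefectAt
        gcongr
        exact norm_inverse_le_ell σ g
    _ ≤ r := hr

theorem isUnit_and_norm_inverse_le [CompleteSpace E]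
    (hAE : ∀ (a : A) (e : E), ‖a • e‖ ≤ ‖a‖ * ‖e‖) {act : K → A → A}
    (hact : ∀ g a, act g (act g⁻¹ a) = a) (hσ_unit : ∀ g h, IsUnit (σ g h))
    (hT : ∀ g, IsSemilinear (act g) (T g)) {b r : ℝ} (hb : ∀ g, ell σ g * ‖T g‖ ≤ b)
    (hr : ∀ g h, sigmaDefectAt σ T g h ≤ r) (hr1 : r < 1) (x : K) :
    IsUnit (T x) ∧ ‖Ring.inverse (T x)‖ ≤ b / (1 - r) := by
  set W := Ring.inverse (σ x⁻¹ x) • T x⁻¹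
  set V := act x⁻¹ (Ring.inverse (σ x x⁻¹)) • T x⁻¹
  have hW : ‖1 - W * T x‖ ≤ r := by
    have h := norm_one_sub_inverse_smul_mul_inv_le hAE (hσ_unit x⁻¹ x⁻¹⁻¹) (hr x⁻¹ x⁻¹⁻¹)
    rw [inv_inv] at h
    exact h
  have hV : ‖1 - T x * V‖ ≤ r := by
    rw [(hT x).mul_smul, hact]
    exact norm_one_sub_inverse_smul_mul_inv_le hAE (hσ_unit x x⁻¹) (hr x x⁻¹)
  have hunit : IsUnit (T x) := isUnit_of_norm_one_sub_mul_lt (hW.trans_lt hr1) (hV.trans_lt hr1)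
  have hWb : ‖W‖ ≤ b :=
    calc ‖W‖ ≤ ‖Ring.inverse (σ x⁻¹ x)‖ * ‖T x⁻¹‖ := opNorm_smul_le_of_norm_smul_le hAE _ _
      _ ≤ ell σ x⁻¹ * ‖T x⁻¹‖ := by
          gcongr
          simpa using norm_inverse_le_ell σ x⁻¹
      _ ≤ b := hb x⁻¹
  refine ⟨hunit, ?_⟩
  calc ‖Ring.inverse (T x)‖ ≤ ‖W‖ / (1 - r) :=
        norm_inverse_le_of_norm_one_sub_mul_le ContinuousLinearMap.norm_id_le hunit hW hr1
    _ ≤ b / (1 - r) := by gcongr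

noncomputable def avgIntegrand (σ : K → K → A) (T : K → E →L[ℝ] E) (g h : K) : E →L[ℝ] E :=
  σ g h • (T (g * h) * Ring.inverse (T h))

theorem avgIntegrand_one_left (hσ : ∀ h, σ 1 h = 1) {h : K} (hunit : IsUnit (T h)) :
    avgIntegrand σ T 1 h = 1 := by
  rw [avgIntegrand, hσ, one_mul, Ring.mul_inverse_cancel _ hunit, one_smul]

theorem avgIntegrand_sub_eq {g h : K} (hunit : IsUnit (T h)) :
    avgIntegrand σ T g h - T g = (σ g h • T (g * h) - T g * T h) * Ring.inverse (T h) := by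
  rw [avgIntegrand, sub_mul, smul_mul_assoc_clm, mul_assoc, Ring.mul_inverse_cancel _ hunit,
    mul_one]

theorem ell_mul_norm_avgIntegrand_sub_le {g h : K} {r B : ℝ} (hunit : IsUnit (T h))
    (hr : sigmaDefectAt σ T g h ≤ r) (hinv : ‖Ring.inverse (T h)‖ ≤ B) :
    ell σ g * ‖avgIntegrand σ T g h - T g‖ ≤ r * B := by
  rw [avgIntegrand_sub_eq hunit]
  exact mul_norm_mul_le (ell_nonneg σ g)
    (ell_mul_norm_le_of_sigmaDefectAt_le hr) hinv

theorem isSemilinear_avgIntegrand {act : K → A → A} (hact_one : ∀ a, act 1 a = a)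
    (hact_mul : ∀ g h a, act (g * h) a = act g (act h a))
    (hσ_central : ∀ g h a, σ g h * a = a * σ g h) (hT : ∀ g, IsSemilinear (act g) (T g))
    (g : K) {h : K} (hunit : IsUnit (T h)) : IsSemilinear (act g) (avgIntegrand σ T g h) := by
  have hinv : IsSemilinear (act h⁻¹) (Ring.inverse (T h)) :=
    (hT h).ringInverse hunit (act_act_inv hact_one hact_mul h)
  have hprod := (hT (g * h)).mul hinv
  rw [show (fun a => act (g * h) (act h⁻¹ a)) = act g from
    funext (act_mul_act_inv hact_one hact_mul g h)] at hprod
  exact hprod.smul fun a => hσ_central g h (act g a)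

theorem avgIntegrand_mul_avgIntegrand {act : K → A → A}
    (hσ_cocycle : ∀ g h k, σ g h * σ (g * h) k = act g (σ h k) * σ g (h * k)) {g k h : K}
    (hF : IsSemilinear (act g) (avgIntegrand σ T g (k * h))) (hunit : IsUnit (T (k * h))) :
    avgIntegrand σ T g (k * h) * avgIntegrand σ T k h = σ g k • avgIntegrand σ T (g * k) h := by
  have hcancel : avgIntegrand σ T g (k * h) * (T (k * h) * Ring.inverse (T h))
      = σ g (k * h) • (T (g * (k * h)) * Ring.inverse (T h)) := by
    rw [avgIntegrand, smul_mul_assoc_clm, ← mul_assoc, Ring.inverse_mul_cancel_right _ _ hunit]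
  calc avgIntegrand σ T g (k * h) * avgIntegrand σ T k h
      = act g (σ k h) • (avgIntegrand σ T g (k * h) * (T (k * h) * Ring.inverse (T h))) :=
        hF.mul_smul _ _
    _ = σ g k • avgIntegrand σ T (g * k) h := by
        rw [hcancel, smul_smul, ← hσ_cocycle, ← smul_smul, avgIntegrand, mul_assoc]

theorem continuous_avgIntegrand [TopologicalSpace K] [IsTopologicalGroup K] [CompleteSpace E]
    (hAE : ∀ (a : A) (e : E), ‖a • e‖ ≤ ‖a‖ * ‖e‖) (hσ : Continuous fun p : K × K => σ p.1 p.2)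
    (hT : Continuous T) (hunit : ∀ h, IsUnit (T h)) :
    Continuous (Function.uncurry (avgIntegrand σ T)) :=
  Continuous.smul_of_norm_smul_le hAE hσ <|
    (hT.comp continuous_mul).mul ((hT.ringInverse hunit).comp continuous_snd)

end Pseudorepresentation

section Averaging

variable {K A E : Type*} [Group K] [MeasurableSpace K] {μ : Measure K} [IsProbabilityMeasure μ]
  [NormedRing A] [NormedAddCommGroup E] [NormedSpace ℝ E]
  [Module A E] [SMulCommClass ℝ A E] [ContinuousConstSMul A E]
  {σ : K → K → A} {T : K → E →L[ℝ] E}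

theorem avgT_one [CompleteSpace E] (hσ : ∀ h, σ 1 h = 1) (hunit : ∀ h, IsUnit (T h)) :
    avgT μ σ T 1 = 1 := by
  change ∫ h, avgIntegrand σ T 1 h ∂μ = 1
  simp only [avgIntegrand_one_left hσ (hunit _)]
  rw [integral_const, probReal_univ, one_smul]

variable [TopologicalSpace K] [CompactSpace K] [BorelSpace K]

theorem integrable_avgIntegrand (hF : Continuous (Function.uncurry (avgIntegrand σ T))) (g : K) :
    Integrable (avgIntegrand σ T g) μ :=
  (hF.comp (Continuous.prodMk_right g)).integrable_of_compactSpace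

theorem continuous_avgT (hF : Continuous (Function.uncurry (avgIntegrand σ T))) :
    Continuous (avgT μ σ T) :=
  continuous_integral_of_continuous_uncurry μ hF

variable [CompleteSpace E]

theorem avgT_sub_eq_integral (hF : Continuous (Function.uncurry (avgIntegrand σ T))) (g : K) :
    avgT μ σ T g - T g = ∫ h, (avgIntegrand σ T g h - T g) ∂μ := by
  rw [integral_sub (integrable_avgIntegrand hF g) (integrable_const _), integral_const,
    probReal_univ, one_smul]
  rfl

theorem ell_mul_norm_avgT_sub_le (hF : Continuous (Function.uncurry (avgIntegrand σ T)))
    {g : K} {C : ℝ} (hC : ∀ h, ell σ g * ‖avgIntegrand σ T g h - T g‖ ≤ C) :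
    ell σ g * ‖avgT μ σ T g - T g‖ ≤ C := by
  rw [avgT_sub_eq_integral hF]
  exact mul_norm_integral_le (ell_nonneg σ g) hC

theorem isSemilinear_avgT (hF : Continuous (Function.uncurry (avgIntegrand σ T)))
    {φ : A → A} {g : K} (hsemi : ∀ h, IsSemilinear φ (avgIntegrand σ T g h)) :
    IsSemilinear φ (avgT μ σ T g) :=
  IsSemilinear.integral hsemi (integrable_avgIntegrand hF g)

theorem smul_avgT_mul_sub_mul [ContinuousMul K] [μ.IsMulLeftInvariant]
    (hF : Continuous (Function.uncurry (avgIntegrand σ T))) {g k : K}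
    (hmul : ∀ h, avgIntegrand σ T g (k * h) * avgIntegrand σ T k h
      = σ g k • avgIntegrand σ T (g * k) h) :
    σ g k • avgT μ σ T (g * k) - avgT μ σ T g * avgT μ σ T k
      = ∫ h, (avgIntegrand σ T g (k * h) - T g) * (avgIntegrand σ T k h - T k) ∂μ
        - (avgT μ σ T g - T g) * (avgT μ σ T k - T k) := by
  set F₁ := fun h => avgIntegrand σ T g (k * h)
  set F₂ := avgIntegrand σ T k
  have hF₁ : Continuous F₁ := hF.comp (continuous_const.prodMk (continuous_const_mul k))
  have hF₂ : Continuous F₂ := hF.comp (Continuous.prodMk_right k)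
  have hint₁ : ∫ h, F₁ h ∂μ = avgT μ σ T g := integral_mul_left_eq_self (avgIntegrand σ T g) k
  have hint₂ : ∫ h, F₂ h ∂μ = avgT μ σ T k := rfl
  have hprod : ∫ h, F₁ h * F₂ h ∂μ = σ g k • avgT μ σ T (g * k) := by
    simp only [F₁, F₂, hmul]
    exact integral_smul_clm _ (integrable_avgIntegrand hF (g * k))
  have hexpand : ∫ h, (F₁ h - T g) * (F₂ h - T k) ∂μ
      = ∫ h, F₁ h * F₂ h ∂μ - (∫ h, F₁ h ∂μ) * T k - (T g * ∫ h, F₂ h ∂μ - T g * T k) := by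
    have hpoint : ∀ h, (F₁ h - T g) * (F₂ h - T k)
        = (F₁ h * F₂ h - F₁ h * T k) - (T g * F₂ h - T g * T k) := fun h => by noncomm_ring
    simp only [hpoint]
    rw [integral_sub, integral_sub, integral_sub, integral_mul_const_of_integrable,
      integral_const_mul_of_integrable, integral_const, probReal_univ, one_smul]
    all_goals first
      | exact integrable_const _
      | exact Continuous.integrable_of_compactSpace (by fun_prop)
  rw [hexpand, hprod, hint₁, hint₂]
  noncomm_ring

theorem sigmaDefectAt_avgT_le [ContinuousMul K] [μ.IsMulLeftInvariant]
    (hF : Continuous (Function.uncurry (avgIntegrand σ T))) (hone : avgT μ σ T 1 = 1) {g k : K}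
    (hmul : ∀ h, avgIntegrand σ T g (k * h) * avgIntegrand σ T k h
      = σ g k • avgIntegrand σ T (g * k) h)
    {C : ℝ} (hC : ∀ g h, ell σ g * ‖avgIntegrand σ T g h - T g‖ ≤ C) :
    sigmaDefectAt σ (avgT μ σ T) g k ≤ 2 * C ^ 2 := by
  have hell : 0 ≤ ell σ g := ell_nonneg σ g
  have hΔ : ∀ g, ell σ g * ‖avgT μ σ T g - T g‖ ≤ C := fun g => ell_mul_norm_avgT_sub_le hF (hC g)
  have hI : ell σ g * ‖∫ h, (avgIntegrand σ T g (k * h) - T g) * (avgIntegrand σ T k h - T k) ∂μ‖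
      ≤ C * C :=
    mul_norm_integral_le hell fun h =>
      mul_norm_mul_le hell (hC g (k * h)) ((norm_le_ell_mul_norm σ k _).trans (hC k h))
  have hD : ell σ g * ‖(avgT μ σ T g - T g) * (avgT μ σ T k - T k)‖ ≤ C * C :=
    mul_norm_mul_le hell (hΔ g) ((norm_le_ell_mul_norm σ k _).trans (hΔ k))
  rw [sigmaDefectAt, hone, sub_self, norm_zero, zero_add, smul_avgT_mul_sub_mul hF hmul]
  calc ell σ g * ‖_ - _‖ ≤ ell σ g * ‖_‖ + ell σ g * ‖_‖ := by
        rw [← mul_add]; gcongr; exact norm_sub_le _ _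
    _ ≤ 2 * C ^ 2 := by linarith

end Averaging

theorem almost_representation_averaging_general
    {K A E : Type*} [Group K] [TopologicalSpace K] [IsTopologicalGroup K]
    [CompactSpace K] [MeasurableSpace K] [BorelSpace K]
    (μ : Measure K) [μ.IsHaarMeasure] [IsProbabilityMeasure μ]
    -- `A` is a unital real Banach algebra
    [NormedRing A]
    -- `E` is a real Banach space which is an `A`-module
    [NormedAddCommGroup E] [NormedSpace ℝ E] [CompleteSpace E]
    [Module A E] [SMulCommClass ℝ A E] [ContinuousConstSMul A E]
    (hAE : ∀ (a : A) (e : E), ‖a • e‖ ≤ ‖a‖ * ‖e‖)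
    -- the action of `K` on `A` by unital isometric algebra automorphisms
    (act : K → A → A)
    (hact_one : ∀ a, act 1 a = a)
    (hact_mul : ∀ g h a, act (g * h) a = act g (act h a))
    -- `σ` is an `A`-valued multiplier for `K`
    (σ : K → K → A)
    (hσ_cont : Continuous fun p : K × K => σ p.1 p.2)
    (hσ_unit : ∀ g h, IsUnit (σ g h))
    (hσ_central : ∀ g h a, σ g h * a = a * σ g h)
    (hσ_normal₁ : ∀ h, σ 1 h = 1)
    (hσ_cocycle : ∀ g h k, σ g h * σ (g * h) k = act g (σ h k) * σ g (h * k))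
    -- `T` is an operator-norm continuous `A`-semilinear pseudorepresentation
    (T : K → E →L[ℝ] E)
    (hT_cont : Continuous T)
    (hT_semilinear : ∀ g (a : A) (e : E), T g (a • e) = act g a • T g e)
    -- the σ-bound is finite and the σ-defect is finite
    (hb_fin : BddAbove (Set.range fun g : K => ell σ g * ‖T g‖))
    (hr_fin : BddAbove (Set.range fun p : K × K =>
      ell σ p.1 * ‖σ p.1 p.2 • T (p.1 * p.2) - (T p.1).comp (T p.2)‖))
    -- `T` is an almost σ-representation
    (h_almost : sigmaDefect σ T ≤ min (1 / 4) (1 / (9 * (sigmaBound σ T) ^ 2))) :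
    -- (a) `T̂` is an operator-norm continuous unital `A`-semilinear pseudorepresentation
    (Continuous (avgT μ σ T) ∧
      (∀ g (a : A) (e : E), avgT μ σ T g (a • e) = act g a • avgT μ σ T g e) ∧
      avgT μ σ T 1 = 1) ∧
    -- (b) `b(T̂) ≤ b(T)/(1 − r(T))`
    (∀ g : K, ell σ g * ‖avgT μ σ T g‖ ≤
        sigmaBound σ T / (1 - sigmaDefect σ T)) ∧
    -- (c) `r(T̂) ≤ 2·(b(T)/(1 − r(T)))²·r(T)²`
    (∀ g h : K,
      ‖(1 : E →L[ℝ] E) - avgT μ σ T 1‖ +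
          ell σ g * ‖σ g h • avgT μ σ T (g * h) -
            (avgT μ σ T g).comp (avgT μ σ T h)‖ ≤
        2 * (sigmaBound σ T / (1 - sigmaDefect σ T)) ^ 2 * (sigmaDefect σ T) ^ 2) ∧
    -- (d) `‖T̂(g) − T(g)‖ ≤ b(T)·r(T)/(1 − r(T))`
    (∀ g : K, ‖avgT μ σ T g - T g‖ ≤
        sigmaBound σ T * sigmaDefect σ T / (1 - sigmaDefect σ T)) := by
  set b := sigmaBound σ T
  set r := sigmaDefect σ T
  have hr1 : r < 1 := (h_almost.trans (min_le_left _ _)).trans_lt (by norm_num)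
  have hr : ∀ g h, sigmaDefectAt σ T g h ≤ r := sigmaDefectAt_le_sigmaDefect hr_fin
  have hinv := isUnit_and_norm_inverse_le hAE (act_act_inv hact_one hact_mul) hσ_unit hT_semilinear
    (mul_norm_le_sigmaBound hb_fin) hr hr1
  have hunit : ∀ h, IsUnit (T h) := fun h => (hinv h).1
  have hF := continuous_avgIntegrand hAE hσ_cont hT_cont hunit
  have hFsemi : ∀ g h, IsSemilinear (act g) (avgIntegrand σ T g h) := fun g h =>
    isSemilinear_avgIntegrand hact_one hact_mul hσ_central hT_semilinear g (hunit h)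
  have hG : ∀ g h, ell σ g * ‖avgIntegrand σ T g h - T g‖ ≤ r * (b / (1 - r)) := fun g h =>
    ell_mul_norm_avgIntegrand_sub_le (hunit h) (hr g h) (hinv h).2
  have hΔ : ∀ g, ell σ g * ‖avgT μ σ T g - T g‖ ≤ r * (b / (1 - r)) := fun g =>
    ell_mul_norm_avgT_sub_le hF (hG g)
  have hone := avgT_one (μ := μ) hσ_normal₁ hunit
  refine ⟨⟨continuous_avgT hF, fun g => isSemilinear_avgT hF (hFsemi g), hone⟩, fun g => ?_,
    fun g k => ?_, fun g => ?_⟩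
  · calc ell σ g * ‖avgT μ σ T g‖ ≤ ell σ g * ‖T g‖ + ell σ g * ‖avgT μ σ T g - T g‖ := by
          rw [← mul_add]
          exact mul_le_mul_of_nonneg_left (norm_le_insert' _ _) (ell_nonneg σ g)
      _ ≤ b + r * (b / (1 - r)) := add_le_add (mul_norm_le_sigmaBound hb_fin g) (hΔ g)
      _ = b / (1 - r) := by field_simp [(sub_pos.2 hr1).ne']; ring
  · exact (sigmaDefectAt_avgT_le hF hone (fun h => avgIntegrand_mul_avgIntegrand hσ_cocycle
      (hFsemi g (k * h)) (hunit (k * h))) hG).trans_eq (by ring)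
  · exact ((norm_le_ell_mul_norm σ g _).trans (hΔ g)).trans_eq (by ring)

/-- Averaging estimates for almost σ-representations of a compact group:
the average `T̂` is again an operator-norm continuous unital `A`-semilinear
pseudorepresentation, with `b(T̂) ≤ b(T)/(1−r(T))`,
`r(T̂) ≤ 2·(b(T)/(1−r(T)))²·r(T)²` and `‖T̂(g) − T(g)‖ ≤ b(T)·r(T)/(1−r(T))`. -/
theorem almost_representation_averaging
    {K A E : Type*} [Group K] [TopologicalSpace K] [IsTopologicalGroup K] [T2Space K]
    [CompactSpace K] [MeasurableSpace K] [BorelSpace K]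
    (μ : Measure K) [μ.IsHaarMeasure] [IsProbabilityMeasure μ]
    -- `A` is a unital real Banach algebra
    [NormedRing A] [NormedAlgebra ℝ A] [CompleteSpace A] [NormOneClass A]
    -- `E` is a real Banach space which is an `A`-module
    [NormedAddCommGroup E] [NormedSpace ℝ E] [CompleteSpace E]
    [Module A E] [SMulCommClass ℝ A E] [ContinuousConstSMul A E]
    (hAE : ∀ (a : A) (e : E), ‖a • e‖ ≤ ‖a‖ * ‖e‖)
    -- the action of `K` on `A` by unital isometric algebra automorphisms
    (act : K → A → A)
    (hact_one : ∀ a, act 1 a = a)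
    (hact_mul : ∀ g h a, act (g * h) a = act g (act h a))
    (hact_add : ∀ g a b, act g (a + b) = act g a + act g b)
    (hact_mul' : ∀ g a b, act g (a * b) = act g a * act g b)
    (hact_smul : ∀ g (r : ℝ) (a : A), act g (r • a) = r • act g a)
    (hact_unital : ∀ g, act g 1 = 1)
    (hact_isom : ∀ g a, ‖act g a‖ = ‖a‖)
    (hact_cont : Continuous fun p : K × A => act p.1 p.2)
    -- `σ` is an `A`-valued multiplier for `K`
    (σ : K → K → A)
    (hσ_cont : Continuous fun p : K × K => σ p.1 p.2)
    (hσ_unit : ∀ g h, IsUnit (σ g h))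
    (hσ_central : ∀ g h a, σ g h * a = a * σ g h)
    (hσ_normal₁ : ∀ h, σ 1 h = 1)
    (hσ_normal₂ : ∀ g, σ g 1 = 1)
    (hσ_cocycle : ∀ g h k, σ g h * σ (g * h) k = act g (σ h k) * σ g (h * k))
    -- `T` is an operator-norm continuous `A`-semilinear pseudorepresentation
    (T : K → E →L[ℝ] E)
    (hT_cont : Continuous T)
    (hT_semilinear : ∀ g (a : A) (e : E), T g (a • e) = act g a • T g e)
    -- the σ-bound is finite and the σ-defect is finite
    (hb_fin : BddAbove (Set.range fun g : K => ell σ g * ‖T g‖))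
    (hr_fin : BddAbove (Set.range fun p : K × K =>
      ell σ p.1 * ‖σ p.1 p.2 • T (p.1 * p.2) - (T p.1).comp (T p.2)‖))
    -- `T` is an almost σ-representation
    (h_almost : sigmaDefect σ T ≤ min (1 / 4) (1 / (9 * (sigmaBound σ T) ^ 2))) :
    -- (a) `T̂` is an operator-norm continuous unital `A`-semilinear pseudorepresentation
    (Continuous (avgT μ σ T) ∧
      (∀ g (a : A) (e : E), avgT μ σ T g (a • e) = act g a • avgT μ σ T g e) ∧
      avgT μ σ T 1 = 1) ∧
    -- (b) `b(T̂) ≤ b(T)/(1 − r(T))`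
    (∀ g : K, ell σ g * ‖avgT μ σ T g‖ ≤
        sigmaBound σ T / (1 - sigmaDefect σ T)) ∧
    -- (c) `r(T̂) ≤ 2·(b(T)/(1 − r(T)))²·r(T)²`
    (∀ g h : K,
      ‖(1 : E →L[ℝ] E) - avgT μ σ T 1‖ +
          ell σ g * ‖σ g h • avgT μ σ T (g * h) -
            (avgT μ σ T g).comp (avgT μ σ T h)‖ ≤
        2 * (sigmaBound σ T / (1 - sigmaDefect σ T)) ^ 2 * (sigmaDefect σ T) ^ 2) ∧
    -- (d) `‖T̂(g) − T(g)‖ ≤ b(T)·r(T)/(1 − r(T))`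
    (∀ g : K, ‖avgT μ σ T g - T g‖ ≤
        sigmaBound σ T * sigmaDefect σ T / (1 - sigmaDefect σ T)) :=
  almost_representation_averaging_general μ hAE act hact_one hact_mul σ hσ_cont hσ_unit hσ_central
    hσ_normal₁ hσ_cocycle T hT_cont hT_semilinear hb_fin hr_fin h_almost
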